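/- Let 1/2 ≤ α ≤ 1 and 1/2 ≤ β < 1. Then the function φ : ℝ → ℝ defined by φ(t) = H_α(e^{2t}, 1) / M_β(e^{2t}, 1) for t ≠ 0 and φ(0) = 1 is positive definite. In particular this holds for α = 1/m and β = m/(m+1) when m ∈ {1, 2}. -/

import Mathlib

open scoped ComplexOrder

/-- Logarithmic mean. -/
noncomputable def LM (x y : ℝ) : ℝ :=
  if x = y then x else (x - y) / (Real.log x - Real.log y)

/-- The mean `A_α`, with `A_0 = LM`. -/
noncomputable def Amean (α x y : ℝ) : ℝ :=
  if x = y then x else if α = 0 then LM x y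
  else α * (x ^ α + y ^ α) * (x - y) / (2 * (x ^ α - y ^ α))

/-- The mean `G_α`, with `G_0 = LM`. -/
noncomputable def Gmean (α x y : ℝ) : ℝ :=
  if x = y then x else if α = 0 then LM x y
  else α * (x * y) ^ (α / 2) * (x - y) / (x ^ α - y ^ α)

/-- The mean `H_α`, with `H_0 = LM`. -/
noncomputable def Hmean (α x y : ℝ) : ℝ :=
  if x = y then x else if α = 0 then LM x y
  else 2 * α * (x * y) ^ α * (x - y) / ((x ^ α + y ^ α) * (x ^ α - y ^ α))

/-- The power difference mean `M_α`. -/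
noncomputable def Mmean (α x y : ℝ) : ℝ :=
  if x = y then x
  else ((α - 1) / α) * (x ^ α - y ^ α) / (x ^ (α - 1) - y ^ (α - 1))

/-- A continuous real function `φ` is positive definite if every matrix
`[φ(tᵢ - tⱼ)]` is positive semidefinite (as a complex matrix). -/
def IsPosDefFun (φ : ℝ → ℝ) : Prop :=
  Continuous φ ∧ ∀ (n : ℕ) (t : Fin n → ℝ),
    Matrix.PosSemidef (Matrix.of fun i j : Fin n => (φ (t i - t j) : ℂ))

/-!
Write `S x = sinh x / x`. With `x = e^{2t}` one computes `H_α(x, 1) = e^t S t / S (2αt)` and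
`M_β(x, 1) = e^t S (βt) / S ((1 - β)t)`, so `φ t = S t / S (2αt) · S ((1 - β)t) / S (βt)`.
By Euler's product `S x = ∏ₖ (1 + (x / kπ)²)`, a quotient `S (at) / S (bt)` with `a² ≤ b²` is the
pointwise limit of finite products of the factors
`(1 + (at / kπ)²) / (1 + (bt / kπ)²) = a²/b² + (1 - a²/b²) / (1 + (bt / kπ)²)`.
These are positive definite because `1 / (1 + t²) = ∫₀^∞ e^{-u} cos (tu) du` is, and positive
definiteness is preserved by sums, products (Schur) and pointwise limits.
-/

open MeasureTheory Filter Topology Matrix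

namespace Matrix

variable {ι 𝕜 : Type*} [Fintype ι] [RCLike 𝕜]

theorem isClosed_setOf_posSemidef : IsClosed {M : Matrix ι ι 𝕜 | M.PosSemidef} := by
  simp only [posSemidef_iff_dotProduct_mulVec, Set.ofPred_and, Set.ofPred_forall]
  refine (isClosed_eq continuous_id.matrix_conjTranspose continuous_id).inter
    (isClosed_iInter fun x => isClosed_le continuous_const ?_)
  exact continuous_const.dotProduct (continuous_id.matrix_mulVec continuous_const)

theorem PosSemidef.of_tendsto {α : Type*} {l : Filter α} [l.NeBot] {A : α → Matrix ι ι 𝕜}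
    {M : Matrix ι ι 𝕜} (hA : Tendsto A l (𝓝 M)) (h : ∀ᶠ a in l, (A a).PosSemidef) :
    M.PosSemidef :=
  isClosed_setOf_posSemidef.mem_of_tendsto hA h

theorem PosSemidef.of_eq_integral {X : Type*} [MeasurableSpace X] {μ : Measure X}
    {A : X → Matrix ι ι 𝕜} {M : Matrix ι ι 𝕜} (hA : ∀ x, (A x).PosSemidef)
    (hint : ∀ i j, Integrable (fun x => A x i j) μ) (hM : ∀ i j, M i j = ∫ x, A x i j ∂μ) :
    M.PosSemidef := by
  rw [posSemidef_iff_dotProduct_mulVec]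
  refine ⟨?_, fun v => ?_⟩
  · ext i j
    simp only [conjTranspose_apply, hM, RCLike.star_def, ← integral_conj]
    congr 1 with x
    simpa using congrFun (congrFun (hA x).isHermitian i) j
  · have hform : star v ⬝ᵥ (M *ᵥ v) = ∫ x, star v ⬝ᵥ (A x *ᵥ v) ∂μ := by
      simp only [dotProduct, mulVec, hM]
      rw [integral_finsetSum _ fun i _ =>
        (integrable_finsetSum _ fun j _ => (hint i j).mul_const _).const_mul _]
      refine Finset.sum_congr rfl fun i _ => ?_
      rw [integral_const_mul, integral_finsetSum _ fun j _ => (hint i j).mul_const _]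
      simp only [integral_mul_const]
    exact hform ▸ integral_nonneg fun x => (hA x).dotProduct_mulVec_nonneg v

end Matrix

def kernelMatrix (f : ℝ → ℝ) {n : ℕ} (t : Fin n → ℝ) : Matrix (Fin n) (Fin n) ℂ :=
  of fun i j => (f (t i - t j) : ℂ)

/-- `IsPosDefFun φ` is definitionally `Continuous φ ∧ IsPosDefKernel φ`. -/
def IsPosDefKernel (f : ℝ → ℝ) : Prop :=
  ∀ (n : ℕ) (t : Fin n → ℝ), (kernelMatrix f t).PosSemidef

section kernelMatrix

variable (f g : ℝ → ℝ) {n : ℕ} (t : Fin n → ℝ)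

@[simp]
theorem kernelMatrix_apply (i j : Fin n) : kernelMatrix f t i j = f (t i - t j) := rfl

theorem kernelMatrix_mul : kernelMatrix (f * g) t = kernelMatrix f t ⊙ kernelMatrix g t := by
  ext; simp

theorem kernelMatrix_add : kernelMatrix (f + g) t = kernelMatrix f t + kernelMatrix g t := by
  ext; simp

end kernelMatrix

theorem isPosDefKernel_const {c : ℝ} (hc : 0 ≤ c) : IsPosDefKernel fun _ => c := by
  intro n t
  convert posSemidef_vecMulVec_self_star fun _ : Fin n => (√c : ℂ) using 1
  ext
  simp [vecMulVec_apply, ← Complex.ofReal_mul, Real.mul_self_sqrt hc]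

theorem isPosDefKernel_cos : IsPosDefKernel Real.cos := by
  intro n t
  convert (posSemidef_vecMulVec_self_star fun i => (Real.cos (t i) : ℂ)).add
    (posSemidef_vecMulVec_self_star fun i => (Real.sin (t i) : ℂ)) using 1
  ext
  simp [vecMulVec_apply, Real.cos_sub, ← Complex.cos_conj, ← Complex.sin_conj]

namespace IsPosDefKernel

variable {f g : ℝ → ℝ}

theorem mul (hf : IsPosDefKernel f) (hg : IsPosDefKernel g) : IsPosDefKernel (f * g) :=
  fun n t => kernelMatrix_mul f g t ▸ (hf n t).hadamard (hg n t)

theorem add (hf : IsPosDefKernel f) (hg : IsPosDefKernel g) : IsPosDefKernel (f + g) :=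
  fun n t => kernelMatrix_add f g t ▸ (hf n t).add (hg n t)

theorem comp_mul (hf : IsPosDefKernel f) (c : ℝ) : IsPosDefKernel fun t => f (c * t) := by
  intro n t
  convert hf n (c • t) using 1
  ext
  simp [mul_sub]

theorem prod {ι : Type*} (s : Finset ι) {F : ι → ℝ → ℝ} (hF : ∀ i ∈ s, IsPosDefKernel (F i)) :
    IsPosDefKernel (∏ i ∈ s, F i) :=
  Finset.prod_induction _ _ (fun _ _ => mul) (isPosDefKernel_const zero_le_one) hF

theorem of_tendsto {α : Type*} {l : Filter α} [l.NeBot] {F : α → ℝ → ℝ}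
    (hF : ∀ᶠ a in l, IsPosDefKernel (F a)) (hlim : ∀ t, Tendsto (F · t) l (𝓝 (f t))) :
    IsPosDefKernel f := fun n t =>
  PosSemidef.of_tendsto (tendsto_pi_nhds.2 fun _ => tendsto_pi_nhds.2 fun _ =>
    (Complex.continuous_ofReal.tendsto _).comp (hlim _)) (hF.mono fun _ ha => ha n t)

theorem integral {X : Type*} [MeasurableSpace X] {μ : Measure X} {F : X → ℝ → ℝ}
    (hF : ∀ x, IsPosDefKernel (F x)) (hint : ∀ s, Integrable (fun x => F x s) μ) :
    IsPosDefKernel fun s => ∫ x, F x s ∂μ := fun n t =>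
  PosSemidef.of_eq_integral (fun x => hF x n t) (fun _ _ => (hint _).ofReal)
    (fun _ _ => integral_ofReal.symm)

end IsPosDefKernel

section LaplaceTransform

open Real

private theorem re_cexp_neg_one_add_mul_I (s u : ℝ) :
    RCLike.re (Complex.exp ((-1 + s * Complex.I) * u)) = exp (-u) * cos (u * s) := by
  simp [Complex.exp_re, mul_comm]

theorem integrableOn_exp_neg_mul_cos (s : ℝ) :
    IntegrableOn (fun u => exp (-u) * cos (u * s)) (Set.Ioi 0) := by
  have h := (integrableOn_exp_mul_complex_Ioi (a := -1 + s * Complex.I) (by simp) 0).re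
  simp only [re_cexp_neg_one_add_mul_I] at h
  exact h

theorem integral_exp_neg_mul_cos (s : ℝ) :
    ∫ u in Set.Ioi 0, exp (-u) * cos (u * s) = (1 + s ^ 2)⁻¹ := by
  have ha : (-1 + s * Complex.I).re < 0 := by simp
  simp_rw [← re_cexp_neg_one_add_mul_I]
  rw [integral_re (integrableOn_exp_mul_complex_Ioi ha 0), integral_exp_mul_complex_Ioi ha]
  simp [Complex.div_re, Complex.normSq_apply, sq]

end LaplaceTransform

theorem isPosDefKernel_inv_one_add_sq : IsPosDefKernel fun t => (1 + t ^ 2)⁻¹ := by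
  have h := IsPosDefKernel.integral (μ := volume.restrict (Set.Ioi 0))
    (fun u => (isPosDefKernel_const (Real.exp_pos (-u)).le).mul (isPosDefKernel_cos.comp_mul u))
    integrableOn_exp_neg_mul_cos
  simpa only [Pi.mul_apply, integral_exp_neg_mul_cos] using h

theorem isPosDefKernel_one_add_sq_div {a b : ℝ} (hab : a ^ 2 ≤ b ^ 2) :
    IsPosDefKernel fun t => (1 + (a * t) ^ 2) / (1 + (b * t) ^ 2) := by
  rcases eq_or_ne b 0 with rfl | hb
  · obtain rfl : a = 0 := by simpa using hab
    simpa using isPosDefKernel_const zero_le_one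
  have hsplit : (fun t => (1 + (a * t) ^ 2) / (1 + (b * t) ^ 2)) =
      fun t => a ^ 2 / b ^ 2 + (1 - a ^ 2 / b ^ 2) * (1 + (b * t) ^ 2)⁻¹ := by
    funext t
    field_simp
    ring
  rw [hsplit]
  have hratio : a ^ 2 / b ^ 2 ≤ 1 := div_le_one_of_le₀ hab (sq_nonneg b)
  exact (isPosDefKernel_const (by positivity)).add
    ((isPosDefKernel_const (sub_nonneg.2 hratio)).mul (isPosDefKernel_inv_one_add_sq.comp_mul b))

noncomputable def sinhc (x : ℝ) : ℝ := if x = 0 then 1 else Real.sinh x / x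

section sinhc

open Real

@[simp]
theorem sinhc_zero : sinhc 0 = 1 := if_pos rfl

theorem sinhc_of_ne_zero {x : ℝ} (hx : x ≠ 0) : sinhc x = sinh x / x := if_neg hx

theorem mul_sinhc (x : ℝ) : x * sinhc x = sinh x := by
  rcases eq_or_ne x 0 with rfl | hx
  · simp
  · rw [sinhc_of_ne_zero hx, mul_div_cancel₀ _ hx]

@[simp]
theorem sinhc_neg (x : ℝ) : sinhc (-x) = sinhc x := by
  rcases eq_or_ne x 0 with rfl | hx
  · simp
  · rw [sinhc_of_ne_zero hx, sinhc_of_ne_zero (neg_ne_zero.2 hx), sinh_neg, neg_div_neg_eq]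

theorem sinhc_pos (x : ℝ) : 0 < sinhc x := by
  rcases lt_trichotomy x 0 with hx | rfl | hx
  · rw [sinhc_of_ne_zero hx.ne]
    exact div_pos_of_neg_of_neg (sinh_neg_iff.2 hx) hx
  · simp
  · rw [sinhc_of_ne_zero hx.ne']
    exact div_pos (sinh_pos_iff.2 hx) hx

theorem sinhc_eq_dslope : sinhc = dslope sinh 0 := by
  funext x
  rcases eq_or_ne x 0 with rfl | hx
  · simp [dslope_same]
  · simp [sinhc_of_ne_zero hx, dslope_of_ne _ hx, slope_def_field]

@[fun_prop]
theorem continuous_sinhc : Continuous sinhc := by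
  rw [sinhc_eq_dslope, ← continuousOn_univ, continuousOn_dslope Filter.univ_mem]
  exact ⟨continuous_sinh.continuousOn, differentiable_sinh 0⟩

theorem tendsto_prod_one_add_sq_sinhc (x : ℝ) :
    Tendsto (fun n : ℕ => ∏ j ∈ Finset.range n, (1 + (x / ((j + 1) * π)) ^ 2)) atTop
      (𝓝 (sinhc x)) := by
  rcases eq_or_ne x 0 with rfl | hx
  · simp
  have hz : (x / π * Complex.I : ℂ) ≠ 0 := by simp [hx, pi_ne_zero]
  rw [← tendsto_ofReal_iff, sinhc_of_ne_zero hx]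
  push_cast
  convert tendsto_euler_sin_prod' hz using 2 with n
  · refine Finset.prod_congr rfl fun j _ => ?_
    field_simp
    ring_nf
    simp
  · rw [show (π : ℂ) * (x / π * Complex.I) = x * Complex.I by field_simp, Complex.sin_mul_I]
    field_simp

end sinhc

open Real in
theorem isPosDefKernel_sinhc_div {a b : ℝ} (hab : a ^ 2 ≤ b ^ 2) :
    IsPosDefKernel fun t => sinhc (a * t) / sinhc (b * t) := by
  set c : ℕ → ℝ := fun j => (j + 1) * π
  refine IsPosDefKernel.of_tendsto (F := fun n => ∏ j ∈ Finset.range n,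
      fun t => (1 + (a / c j * t) ^ 2) / (1 + (b / c j * t) ^ 2)) (l := atTop)
    (Eventually.of_forall fun n => IsPosDefKernel.prod _ fun j _ =>
      isPosDefKernel_one_add_sq_div ?_) fun t => ?_
  · rw [div_pow, div_pow]
    gcongr
  · simp only [Finset.prod_apply, Finset.prod_div_distrib, div_mul_eq_mul_div]
    exact (tendsto_prod_one_add_sq_sinhc _).div (tendsto_prod_one_add_sq_sinhc _)
      (sinhc_pos _).ne'

section PowerMeans

open Real

theorem exp_two_mul_sub_one (y : ℝ) : exp (2 * y) - 1 = 2 * y * exp y * sinhc y := by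
  rw [show 2 * y * exp y * sinhc y = 2 * exp y * (y * sinhc y) by ring, mul_sinhc, sinh_eq,
    exp_neg]
  field_simp
  rw [sq, ← exp_add, two_mul]

theorem exp_two_mul_rpow (t a : ℝ) : exp (2 * t) ^ a = exp (2 * (a * t)) := by
  rw [← exp_mul]
  ring_nf

theorem hmean_exp_two_mul_one {α t : ℝ} (hα : α ≠ 0) (ht : t ≠ 0) :
    Hmean α (exp (2 * t)) 1 = exp t * sinhc t / sinhc (2 * α * t) := by
  have hprod : (exp (2 * t) ^ α + 1) * (exp (2 * t) ^ α - 1) = exp (2 * t) ^ (2 * α) - 1 := by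
    rw [two_mul α, rpow_add (exp_pos _)]
    ring
  rw [Hmean, if_neg (by simpa using ht), if_neg hα, one_rpow, mul_one, hprod,
    exp_two_mul_rpow, exp_two_mul_rpow, exp_two_mul_sub_one, exp_two_mul_sub_one,
    ← mul_assoc 2 α t]
  have := (sinhc_pos t).ne'
  have := (sinhc_pos (2 * α * t)).ne'
  field_simp

theorem mmean_exp_two_mul_one {β t : ℝ} (hβ₀ : β ≠ 0) (hβ₁ : β ≠ 1) (ht : t ≠ 0) :
    Mmean β (exp (2 * t)) 1 = exp t * sinhc (β * t) / sinhc ((1 - β) * t) := by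
  rw [Mmean, if_neg (by simpa using ht), one_rpow, one_rpow,
    exp_two_mul_rpow, exp_two_mul_rpow, exp_two_mul_sub_one, exp_two_mul_sub_one,
    show (β - 1) * t = -((1 - β) * t) by ring, sinhc_neg]
  have := (sinhc_pos (β * t)).ne'
  have := (sinhc_pos ((1 - β) * t)).ne'
  have := sub_ne_zero.2 hβ₁
  field_simp
  rw [mul_assoc (1 - β), ← exp_add]
  ring_nf

end PowerMeans

theorem statement14_general (α β : ℝ) (hα1 : 1 / 2 ≤ α) (hβ1 : 1 / 2 ≤ β) (hβ2 : β < 1)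
    (φ : ℝ → ℝ) (hφ0 : φ 0 = 1)
    (hφ : ∀ t : ℝ, t ≠ 0 →
      φ t = Hmean α (Real.exp (2 * t)) 1 / Mmean β (Real.exp (2 * t)) 1) :
    IsPosDefFun φ := by
  have hφ_eq : φ = fun t =>
      sinhc (1 * t) / sinhc (2 * α * t) * (sinhc ((1 - β) * t) / sinhc (β * t)) := by
    funext t
    rcases eq_or_ne t 0 with rfl | ht
    · simp [hφ0]
    · rw [hφ t ht, hmean_exp_two_mul_one (by positivity) ht,
        mmean_exp_two_mul_one (by positivity) hβ2.ne ht, one_mul]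
      have := (Real.exp_pos t).ne'
      have := (sinhc_pos (β * t)).ne'
      have := (sinhc_pos ((1 - β) * t)).ne'
      field_simp
  rw [hφ_eq]
  refine ⟨by fun_prop (disch := exact fun _ => (sinhc_pos _).ne'),
    (isPosDefKernel_sinhc_div ?_).mul (isPosDefKernel_sinhc_div ?_)⟩ <;> nlinarith

/-- For `1/2 ≤ α ≤ 1` and `1/2 ≤ β < 1`, the function `t ↦ H_α(e^{2t},1)/M_β(e^{2t},1)`
(with value `1` at `t = 0`) is positive definite.
(In particular for `α = 1/m`, `β = m/(m+1)`, `m ∈ {1,2}`.) -/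
theorem statement14 (α β : ℝ) (hα1 : 1 / 2 ≤ α) (hα2 : α ≤ 1) (hβ1 : 1 / 2 ≤ β) (hβ2 : β < 1)
    (φ : ℝ → ℝ) (hφ0 : φ 0 = 1)
    (hφ : ∀ t : ℝ, t ≠ 0 →
      φ t = Hmean α (Real.exp (2 * t)) 1 / Mmean β (Real.exp (2 * t)) 1) :
    IsPosDefFun φ :=
  statement14_general α β hα1 hβ1 hβ2 φ hφ0 hφ
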